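/- Let r : D → ℝⁿ be harmonic on a connected open set D ⊂ ℝ². If the conformality conditions |r_u|² = |r_v|² and r_u · r_v = 0 hold on a nonempty open subset of D, then they hold on all of D. -/

import Mathlib

/-!
The Hopf differential `φ = |r_u|² - |r_v|² - 2i⟪r_u, r_v⟫` of a harmonic map is holomorphic:
harmonicity and the symmetry of second derivatives say that `r_u - i r_v` satisfies the
Cauchy–Riemann equations, and `φ` is its complex-bilinear square. The conformality relations say
exactly `φ = 0`, so by the identity theorem they propagate from `U` to the connected set `D`.
-/

open Complex RealInnerProductSpace Filter Topology

section HopfDifferential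

variable {E : Type*} [NormedAddCommGroup E] [InnerProductSpace ℝ E]

noncomputable def hopfForm (a b : E) : ℂ :=
  ⟨‖a‖ ^ 2 - ‖b‖ ^ 2, -2 * ⟪a, b⟫⟩

theorem hopfForm_eq_zero_iff {a b : E} :
    hopfForm a b = 0 ↔ ‖a‖ ^ 2 = ‖b‖ ^ 2 ∧ ⟪a, b⟫ = 0 := by
  simp only [hopfForm, Complex.ext_iff, zero_re, zero_im, sub_eq_zero, mul_eq_zero,
    neg_eq_zero, two_ne_zero, false_or]

/-- `hAB` and `hBA` are the Cauchy–Riemann equations for `a - i b`. -/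
theorem differentiableAt_hopfForm {a b : ℂ → E} {A B : ℂ →L[ℝ] E} {z : ℂ}
    (ha : HasFDerivAt a A z) (hb : HasFDerivAt b B z)
    (hAB : A I = B 1) (hBA : B I = -A 1) :
    DifferentiableAt ℂ (fun t => hopfForm (a t) (b t)) z := by
  have hF := equivRealProdCLM.symm.hasFDerivAt.comp z
    ((ha.norm_sq.sub hb.norm_sq).prodMk ((ha.inner ℝ hb).const_mul (-2)))
  refine (hF.complexOfReal_hasFDerivAt ?_).differentiableAt
  apply Complex.ext <;>
    simp only [hAB, hBA, neg_smul, ContinuousLinearMap.comp_apply, ContinuousLinearMap.prod_apply,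
      sub_apply, smul_apply, neg_apply, coe_innerSL_apply, fderivInnerCLM_apply, inner_neg_right,
      real_inner_comm, nsmul_eq_mul, Nat.cast_ofNat, smul_neg, sub_neg_eq_add, smul_eq_mul,
      ContinuousLinearEquiv.coe_coe, equivRealProdCLM_symm_apply_re,
      equivRealProdCLM_symm_apply_im, mul_re, mul_im, I_re, I_im, mul_neg, zero_mul, neg_zero,
      one_mul, zero_add] <;>
    ring

noncomputable def hopfDifferential (r : ℂ → E) (z : ℂ) : ℂ :=
  hopfForm (fderiv ℝ r z 1) (fderiv ℝ r z I)

theorem differentiableAt_hopfDifferential {r : ℂ → E} {z : ℂ} (hr : ContDiffAt ℝ 2 r z)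
    (harm : fderiv ℝ (fun w => fderiv ℝ r w 1) z 1 +
      fderiv ℝ (fun w => fderiv ℝ r w I) z I = 0) :
    DifferentiableAt ℂ (hopfDifferential r) z := by
  have hr' : HasFDerivAt (fderiv ℝ r) (fderiv ℝ (fderiv ℝ r) z) z :=
    ((hr.fderiv_right le_rfl).differentiableAt one_ne_zero).hasFDerivAt
  have hpartial (v : ℂ) : HasFDerivAt (fun w => fderiv ℝ r w v)
      ((ContinuousLinearMap.apply ℝ E v).comp (fderiv ℝ (fderiv ℝ r) z)) z :=
    (ContinuousLinearMap.apply ℝ E v).hasFDerivAt.comp z hr'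
  have hsymm := hr.isSymmSndFDerivAt (by simp [minSmoothness_of_isRCLikeNormedField]) I 1
  rw [(hpartial 1).fderiv, (hpartial I).fderiv] at harm
  exact differentiableAt_hopfForm (hpartial 1) (hpartial I) hsymm
    (eq_neg_of_add_eq_zero_right harm)

end HopfDifferential

/-- For a harmonic map r on a connected open D ⊂ ℝ² ≅ ℂ, if the
conformality relations hold on a nonempty open subset of D, they hold on all of D. -/
theorem stmt4 {n : ℕ} (D : Set ℂ) (hD : IsOpen D) (hDconn : IsConnected D)
    (r : ℂ → EuclideanSpace ℝ (Fin n)) (hr : ContDiffOn ℝ 2 r D)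
    (harm : ∀ z ∈ D,
      fderiv ℝ (fun w => fderiv ℝ r w 1) z 1 +
        fderiv ℝ (fun w => fderiv ℝ r w Complex.I) z Complex.I = 0)
    (U : Set ℂ) (hU : IsOpen U) (hUne : U.Nonempty) (hUD : U ⊆ D)
    (hconfU : ∀ z ∈ U,
      ‖fderiv ℝ r z 1‖ ^ 2 = ‖fderiv ℝ r z Complex.I‖ ^ 2 ∧
        (inner ℝ (fderiv ℝ r z 1) (fderiv ℝ r z Complex.I) : ℝ) = 0) :
    ∀ z ∈ D,
      ‖fderiv ℝ r z 1‖ ^ 2 = ‖fderiv ℝ r z Complex.I‖ ^ 2 ∧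
        (inner ℝ (fderiv ℝ r z 1) (fderiv ℝ r z Complex.I) : ℝ) = 0 := by
  have hφ : AnalyticOnNhd ℂ (hopfDifferential r) D :=
    DifferentiableOn.analyticOnNhd (fun z hz =>
      (differentiableAt_hopfDifferential (hr.contDiffAt (hD.mem_nhds hz))
        (harm z hz)).differentiableWithinAt) hD
  obtain ⟨z₀, hz₀⟩ := hUne
  have hφU : hopfDifferential r =ᶠ[𝓝 z₀] 0 :=
    eventually_of_mem (hU.mem_nhds hz₀) fun w hw => hopfForm_eq_zero_iff.2 (hconfU w hw)
  have hφD :=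
    hφ.eqOn_zero_of_preconnected_of_eventuallyEq_zero hDconn.isPreconnected (hUD hz₀) hφU
  exact fun z hz => hopfForm_eq_zero_iff.1 (hφD hz)
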